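/- Let H be a separable infinite-dimensional complex Hilbert space and let {f_n}_{n=0}^∞ be a sequence in H. Then {f_n} is an SCFC sequence (i.e., there exists a surjective bounded linear operator B on H such that {B f_n} is a Parseval frame for H) if and only if there exist an infinite-dimensional closed linear subspace D ⊆ H and a constant A > 0 such that A‖f‖² ≤ ∑_{n=0}^∞ |⟨f, f_n⟩|² < ∞ for every f ∈ D. -/

import Mathlib

/-!
If `B` is surjective, the open mapping theorem makes `B†` bounded below, so `D = range B†` is
closed and infinite-dimensional, and for `f = B† g` the Parseval identity gives
`∑ |⟨f, fₙ⟩|² = ∑ |⟨g, B fₙ⟩|² = ‖g‖² ≥ ‖f‖² / ‖B†‖²`.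

Conversely, the analysis operator `T f = (⟨fₙ, f⟩)ₙ : D → ℓ²` is bounded by the closed graph
theorem and bounded below by hypothesis. Its range is therefore a closed, separable,
infinite-dimensional subspace of `ℓ²`, hence isometric to `H`, which gives an isomorphism
`C : H ≃ D` with `‖T (C g)‖ = ‖g‖`. Then `B = C†` satisfies `⟨g, B fₙ⟩ = ⟨C g, fₙ⟩`, so `{B fₙ}` is
a Parseval frame, and `B` is surjective because `C` has a bounded left inverse.
-/

section SeparableHilbert

variable {𝕜 E F : Type*} [RCLike 𝕜]
  [NormedAddCommGroup E] [InnerProductSpace 𝕜 E] [NormedAddCommGroup F] [InnerProductSpace 𝕜 F]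

theorem Orthonormal.countable [TopologicalSpace.SeparableSpace E] {ι : Type*} {v : ι → E}
    (hv : Orthonormal 𝕜 v) : Countable ι := by
  have hsep : ∀ i j, i ≠ j → 1 ≤ dist (v i) (v j) := fun i j hij => by
    have hsq : ‖v i - v j‖ ^ 2 = 2 := by
      rw [@norm_sub_sq 𝕜, hv.inner_eq_zero hij, hv.norm_eq_one, hv.norm_eq_one]
      norm_num
    rw [dist_eq_norm]
    nlinarith [norm_nonneg (v i - v j)]
  have hdisj : (Set.univ : Set ι).PairwiseDisjoint fun i => Metric.ball (v i) (1 / 2) :=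
    fun i _ j _ hij => Metric.ball_disjoint_ball (by linarith [hsep i j hij])
  exact Set.countable_univ_iff.mp <| hdisj.countable_of_isOpen (fun _ _ => Metric.isOpen_ball)
    fun _ _ => Metric.nonempty_ball.2 (by norm_num)

theorem HilbertBasis.infinite_of_not_finiteDimensional {ι : Type*} (b : HilbertBasis ι 𝕜 E)
    (hE : ¬ FiniteDimensional 𝕜 E) : Infinite ι := by
  by_contra hfin
  rw [not_infinite_iff_finite] at hfin
  have := Fintype.ofFinite ι
  exact hE (Module.Finite.of_basis b.toOrthonormalBasis.toBasis)

variable [CompleteSpace E]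

noncomputable def HilbertBasis.reindex {ι ι' : Type*} (b : HilbertBasis ι 𝕜 E) (e : ι ≃ ι') :
    HilbertBasis ι' 𝕜 E :=
  HilbertBasis.mk (b.orthonormal.comp _ e.symm.injective) <| by
    rw [Set.range_comp, e.symm.range_eq_univ, Set.image_univ, b.dense_span]

variable [TopologicalSpace.SeparableSpace E]

theorem nonempty_hilbertBasis_nat (hE : ¬ FiniteDimensional 𝕜 E) :
    Nonempty (HilbertBasis ℕ 𝕜 E) := by
  obtain ⟨w, b, -⟩ := exists_hilbertBasis 𝕜 E
  have := b.orthonormal.countable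
  have := b.infinite_of_not_finiteDimensional hE
  exact ⟨b.reindex (nonempty_denumerable w).some.eqv⟩

theorem nonempty_linearIsometryEquiv_of_not_finiteDimensional
    [CompleteSpace F] [TopologicalSpace.SeparableSpace F]
    (hE : ¬ FiniteDimensional 𝕜 E) (hF : ¬ FiniteDimensional 𝕜 F) : Nonempty (E ≃ₗᵢ[𝕜] F) := by
  obtain ⟨bE⟩ := nonempty_hilbertBasis_nat hE
  obtain ⟨bF⟩ := nonempty_hilbertBasis_nat hF
  exact ⟨bE.repr.trans bF.repr.symm⟩

end SeparableHilbert

section LpLift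

open scoped ENNReal

variable {𝕜 E ι : Type*} [NontriviallyNormedField 𝕜] [NormedAddCommGroup E] [NormedSpace 𝕜 E]
  [CompleteSpace E] {G : ι → Type*} [∀ i, NormedAddCommGroup (G i)] [∀ i, NormedSpace 𝕜 (G i)]
  [∀ i, CompleteSpace (G i)] {p : ℝ≥0∞} [Fact (1 ≤ p)]

noncomputable def lp.liftCLM (φ : ∀ i, E →L[𝕜] G i) (hφ : ∀ x, Memℓp (fun i => φ i x) p) :
    E →L[𝕜] lp G p :=
  let T : E →ₗ[𝕜] lp G p :=
    { toFun := fun x => ⟨fun i => φ i x, hφ x⟩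
      map_add' := fun x y => lp.ext <| funext fun i => map_add (φ i) x y
      map_smul' := fun c x => lp.ext <| funext fun i => map_smul (φ i) c x }
  ⟨T, T.continuous_of_seq_closed_graph fun _ x y hux huy => lp.ext <| funext fun i =>
    tendsto_nhds_unique (((lp.evalCLM 𝕜 G p i).continuous.tendsto y).comp huy)
      (((φ i).continuous.tendsto x).comp hux)⟩

@[simp]
theorem lp.liftCLM_apply (φ : ∀ i, E →L[𝕜] G i) (hφ : ∀ x, Memℓp (fun i => φ i x) p) (x : E)
    (i : ι) : lp.liftCLM φ hφ x i = φ i x :=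
  rfl

end LpLift

theorem lp.hasSum_norm_sq {ι : Type*} {G : ι → Type*} [∀ i, NormedAddCommGroup (G i)]
    (f : lp G 2) : HasSum (fun i => ‖f i‖ ^ 2) (‖f‖ ^ 2) := by
  simpa [Real.rpow_two] using lp.hasSum_norm (by norm_num) f

theorem ContinuousLinearMap.exists_antilipschitzWith_of_sq_le {𝕜 E F : Type*}
    [NontriviallyNormedField 𝕜] [NormedAddCommGroup E] [NormedSpace 𝕜 E] [NormedAddCommGroup F]
    [NormedSpace 𝕜 F] (T : E →L[𝕜] F) {A : ℝ} (hA : 0 < A)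
    (hT : ∀ x, A * ‖x‖ ^ 2 ≤ ‖T x‖ ^ 2) : ∃ c, AntilipschitzWith c T := by
  refine ⟨⟨(√A)⁻¹, by positivity⟩, T.antilipschitz_of_bound fun x => ?_⟩
  have : √A * ‖x‖ ≤ ‖T x‖ := (pow_le_pow_iff_left₀ (by positivity) (norm_nonneg _)
    two_ne_zero).1 (by rw [mul_pow, Real.sq_sqrt hA.le]; exact hT x)
  show ‖x‖ ≤ (√A)⁻¹ * ‖T x‖
  rw [inv_mul_eq_div, le_div_iff₀ (Real.sqrt_pos.2 hA)]
  linarith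

theorem ContinuousLinearMap.exists_equiv_norm_apply_eq {𝕜 E F K : Type*} [RCLike 𝕜]
    [NormedAddCommGroup E] [NormedSpace 𝕜 E] [CompleteSpace E] [TopologicalSpace.SeparableSpace E]
    [NormedAddCommGroup F] [InnerProductSpace 𝕜 F] [CompleteSpace F]
    [TopologicalSpace.SeparableSpace F] [NormedAddCommGroup K] [InnerProductSpace 𝕜 K]
    [CompleteSpace K] (hE : ¬ FiniteDimensional 𝕜 E) (hF : ¬ FiniteDimensional 𝕜 F)
    {T : E →L[𝕜] K} {c : NNReal} (hT : AntilipschitzWith c T) :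
    ∃ C : F ≃L[𝕜] E, ∀ g, ‖T (C g)‖ = ‖g‖ := by
  let e := T.equivRange hT.injective (hT.isClosed_range T.uniformContinuous)
  have := hT.completeSpace_range_clm
  have := e.surjective.denseRange.separableSpace e.continuous
  have hR : ¬ FiniteDimensional 𝕜 T.range := fun _ => hE e.toLinearEquiv.symm.finiteDimensional
  obtain ⟨W⟩ := nonempty_linearIsometryEquiv_of_not_finiteDimensional hF hR
  refine ⟨W.toContinuousLinearEquiv.trans e.symm, fun g => ?_⟩
  have : T (e.symm (W g)) = W g := congrArg Subtype.val (e.apply_symm_apply (W g))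
  calc ‖T (e.symm (W g))‖ = ‖W g‖ := by rw [this, Submodule.coe_norm]
    _ = ‖g‖ := W.norm_map g

section Frames

open ContinuousLinearMap

variable {𝕜 E F ι : Type*} [RCLike 𝕜]
  [NormedAddCommGroup E] [InnerProductSpace 𝕜 E] [CompleteSpace E]
  [NormedAddCommGroup F] [InnerProductSpace 𝕜 F] [CompleteSpace F]

theorem ContinuousLinearMap.adjoint_surjective_of_comp_eq_id {C : E →L[𝕜] F} {M : F →L[𝕜] E}
    (h : M ∘L C = .id 𝕜 E) : Function.Surjective (adjoint C) := fun x =>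
  ⟨adjoint M x, by rw [← comp_apply, ← adjoint_comp, h, adjoint_id, id_apply]⟩

theorem ContinuousLinearMap.exists_antilipschitzWith_adjoint {B : E →L[𝕜] F}
    (hB : Function.Surjective B) : ∃ c, AntilipschitzWith c (adjoint B) := by
  obtain ⟨c, hc, hpre⟩ := B.exists_preimage_norm_le hB
  refine ⟨⟨c, hc.le⟩, (adjoint B).antilipschitz_of_bound fun f => ?_⟩
  obtain ⟨x, rfl, hx⟩ := hpre f
  have : ‖B x‖ ^ 2 ≤ ‖adjoint B (B x)‖ * (c * ‖B x‖) := calc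
    ‖B x‖ ^ 2 = RCLike.re (inner 𝕜 (adjoint B (B x)) x) := by
      rw [adjoint_inner_left, inner_self_eq_norm_sq]
    _ ≤ ‖adjoint B (B x)‖ * ‖x‖ := (RCLike.re_le_norm _).trans (norm_inner_le_norm _ _)
    _ ≤ ‖adjoint B (B x)‖ * (c * ‖B x‖) := by gcongr
  show ‖B x‖ ≤ c * ‖adjoint B (B x)‖
  rcases (norm_nonneg (B x)).eq_or_lt with h0 | hpos
  · rw [← h0]
    positivity
  · exact le_of_mul_le_mul_right (by linarith) hpos

theorem exists_subspace_lower_bound_of_surjective_parseval (hF : ¬ FiniteDimensional 𝕜 F)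
    (v : ι → E) {B : E →L[𝕜] F} (hB : Function.Surjective B)
    (hframe : ∀ f, HasSum (fun i => ‖inner 𝕜 f (B (v i))‖ ^ 2) (‖f‖ ^ 2)) :
    ∃ D : Submodule 𝕜 E, IsClosed (D : Set E) ∧ ¬ FiniteDimensional 𝕜 D ∧
      ∃ A : ℝ, 0 < A ∧ ∀ f ∈ D,
        Summable (fun i => ‖inner 𝕜 f (v i)‖ ^ 2) ∧ A * ‖f‖ ^ 2 ≤ ∑' i, ‖inner 𝕜 f (v i)‖ ^ 2 := by
  set B' := adjoint B
  obtain ⟨c, hc⟩ := exists_antilipschitzWith_adjoint hB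
  refine ⟨B'.range, by simpa [LinearMap.coe_range] using hc.isClosed_range B'.uniformContinuous,
    fun _ => hF (LinearEquiv.ofInjective _ hc.injective).symm.finiteDimensional,
    (‖B'‖ + 1)⁻¹ ^ 2, by positivity, ?_⟩
  rintro _ ⟨g, rfl⟩
  have hg : HasSum (fun i => ‖inner 𝕜 (B' g) (v i)‖ ^ 2) (‖g‖ ^ 2) := by
    simpa only [B', adjoint_inner_left] using hframe g
  refine ⟨hg.summable, hg.tsum_eq ▸ ?_⟩
  have : ‖B' g‖ ≤ (‖B'‖ + 1) * ‖g‖ := (le_opNorm _ _).trans (by gcongr; linarith)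
  calc (‖B'‖ + 1)⁻¹ ^ 2 * ‖B' g‖ ^ 2 = ((‖B'‖ + 1)⁻¹ * ‖B' g‖) ^ 2 := by ring
    _ ≤ ‖g‖ ^ 2 := by
      gcongr
      rwa [inv_mul_le_iff₀ (by positivity)]

theorem exists_surjective_parseval_of_subspace_lower_bound [TopologicalSpace.SeparableSpace E]
    [TopologicalSpace.SeparableSpace F] (hF : ¬ FiniteDimensional 𝕜 F) (v : ι → E)
    {D : Submodule 𝕜 E} (hD : IsClosed (D : Set E)) (hDinf : ¬ FiniteDimensional 𝕜 D) {A : ℝ}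
    (hA : 0 < A) (hbound : ∀ f ∈ D,
      Summable (fun i => ‖inner 𝕜 f (v i)‖ ^ 2) ∧ A * ‖f‖ ^ 2 ≤ ∑' i, ‖inner 𝕜 f (v i)‖ ^ 2) :
    ∃ B : E →L[𝕜] F, Function.Surjective B ∧
      ∀ f, HasSum (fun i => ‖inner 𝕜 f (B (v i))‖ ^ 2) (‖f‖ ^ 2) := by
  have : CompleteSpace D := hD.completeSpace_coe
  let T : D →L[𝕜] lp (fun _ : ι => 𝕜) 2 :=
    lp.liftCLM (fun i => (innerSL 𝕜 (v i)).comp D.subtypeL) fun f => memℓp_gen <| by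
      simpa [Real.rpow_two, norm_inner_symm] using (hbound f f.2).1
  have hT : ∀ f : D, HasSum (fun i => ‖inner 𝕜 (f : E) (v i)‖ ^ 2) (‖T f‖ ^ 2) := fun f => by
    simpa [T, norm_inner_symm] using lp.hasSum_norm_sq (T f)
  obtain ⟨c, hc⟩ := T.exists_antilipschitzWith_of_sq_le hA fun f => by
    simpa [(hT f).tsum_eq] using (hbound f f.2).2
  obtain ⟨C, hC⟩ := T.exists_equiv_norm_apply_eq hDinf hF hc
  refine ⟨adjoint (D.subtypeL ∘L C), adjoint_surjective_of_comp_eq_id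
    (M := C.symm ∘L D.orthogonalProjectionOnto) (by ext; simp), fun g => ?_⟩
  simpa [adjoint_inner_right, hC] using hT (C g)

end Frames

open scoped ComplexInnerProductSpace

/-- `{f_n}` is an SCFC sequence (some surjective bounded operator `B` maps it to
a Parseval frame of `H`) iff there exist an infinite-dimensional closed subspace `D ⊆ H` and
`A > 0` with `A‖f‖² ≤ ∑ |⟨f, f_n⟩|² < ∞` for all `f ∈ D`. -/
theorem stmt3 {H : Type*} [NormedAddCommGroup H] [InnerProductSpace ℂ H]
    [CompleteSpace H] [TopologicalSpace.SeparableSpace H]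
    (hH : ¬ FiniteDimensional ℂ H) (fseq : ℕ → H) :
    (∃ B : H →L[ℂ] H, Function.Surjective B ∧
        ∀ f : H, HasSum (fun n => ‖⟪f, B (fseq n)⟫‖ ^ 2) (‖f‖ ^ 2)) ↔
      ∃ D : Submodule ℂ H, IsClosed (D : Set H) ∧ ¬ FiniteDimensional ℂ D ∧
        ∃ A : ℝ, 0 < A ∧ ∀ f ∈ D,
          Summable (fun n => ‖⟪f, fseq n⟫‖ ^ 2) ∧
          A * ‖f‖ ^ 2 ≤ ∑' n, ‖⟪f, fseq n⟫‖ ^ 2 := by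
  constructor
  · rintro ⟨B, hB, hframe⟩
    exact exists_subspace_lower_bound_of_surjective_parseval hH fseq hB hframe
  · rintro ⟨D, hD, hDinf, A, hA, hbound⟩
    exact exists_surjective_parseval_of_subspace_lower_bound hH fseq hD hDinf hA hbound
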